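/- For every r > 0 and every (t,φ) ∈ [0,1] × (0,π), one has 1/2 ≤ F_r(t,φ) ≤ t^r + 1 ≤ 2. -/

import Mathlib

/-!
Both integrals in `F_r` integrate the nonnegative function `cos^r` over subintervals of
`[-π/2, π/2]`, so each lies between `0` and `c(2,r)`; this gives `F_r ≤ t^r + 1`.
Since `tan (φ/2) = (1 - cos φ)/sin φ`, the angle `α` lies in `[φ - π/2, φ/2]`, so the second
integral runs over an interval containing `[0, π/2]`, on which `cos^r` has integral
`c(2,r)/2` by symmetry; this gives `F_r ≥ 1/2`.
-/

open MeasureTheory Real Set Filter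

noncomputable section

/-- `kappa m` is the volume `κ_m = π^{m/2}/Γ(m/2+1)` of the `m`-dimensional unit ball. -/
def kappa (m : ℕ) : ℝ := Real.pi ^ ((m : ℝ) / 2) / Real.Gamma ((m : ℝ) / 2 + 1)

/-- `omegaC m` is the surface area `ω_m = 2π^{m/2}/Γ(m/2)` of the unit sphere `S^{m-1}`. -/
def omegaC (m : ℕ) : ℝ := 2 * Real.pi ^ ((m : ℝ) / 2) / Real.Gamma ((m : ℝ) / 2)

/-- `bn2 n = ω_{n-1} ω_n / (4π)`. -/
def bn2 (n : ℕ) : ℝ := omegaC (n - 1) * omegaC n / (4 * Real.pi)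

/-- The `j`-th standard basis vector of `ℝ^m` (or `0` if `j ≥ m`). -/
def eVec (m j : ℕ) : EuclideanSpace ℝ (Fin m) :=
  if h : j < m then EuclideanSpace.single ⟨j, h⟩ (1 : ℝ) else 0

/-- `cC m s = c(m,s) = ∫_{S^{m-1}} ⟨e,u⟩₊^s dH^{m-1}(u)` for the fixed unit vector `e = e₁`. -/
def cC (m : ℕ) (s : ℝ) : ℝ :=
  ∫ u in Metric.sphere (0 : EuclideanSpace ℝ (Fin m)) 1,
    max ((inner ℝ (eVec m 0) u : ℝ)) 0 ^ s ∂(μH[(m : ℝ) - 1])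

/-- `c2 s = c(2,s) = ∫_{-π/2}^{π/2} (cos θ)^s dθ`. -/
def c2 (s : ℝ) : ℝ := ∫ θ in (-(Real.pi / 2))..(Real.pi / 2), Real.cos θ ^ s

/-- The hyperplane `H(u,t) = {x ∈ ℝⁿ : ⟨x,u⟩ = t}`. -/
def hyp (n : ℕ) (u : EuclideanSpace ℝ (Fin n)) (t : ℝ) : Set (EuclideanSpace ℝ (Fin n)) :=
  {x | (inner ℝ x u : ℝ) = t}

/-- `innerInt n r K = ∫_{S^{n-1}} ∫_0^∞ 1{H(u,t) ∩ K ≠ ∅} t^{r-1} dt dH^{n-1}(u)`. -/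
def innerInt (n : ℕ) (r : ℝ) (K : Set (EuclideanSpace ℝ (Fin n))) : ℝ :=
  ∫ u in Metric.sphere (0 : EuclideanSpace ℝ (Fin n)) 1,
    (∫ t in Set.Ioi (0 : ℝ),
      Set.indicator {t : ℝ | (hyp n u t ∩ K).Nonempty} (fun t => t ^ (r - 1)) t)
    ∂(μH[(n : ℝ) - 1])

/-- `momentI n k r γ = I_k(n,r,γ)`, the `k`-th moment of the volume of the zero cell. -/
def momentI (n k : ℕ) (r γ : ℝ) : ℝ :=
  ∫ x : Fin k → EuclideanSpace ℝ (Fin n),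
    Real.exp (-(2 * γ / ((n : ℝ) * kappa n)) *
      innerInt n r (convexHull ℝ (insert 0 (Set.range x))))

/-- `VarF n r γ = Var(n,r,γ) = I_2 - I_1²`, the variance of the volume of the zero cell. -/
def VarF (n : ℕ) (r γ : ℝ) : ℝ := momentI n 2 r γ - (momentI n 1 r γ) ^ 2

/-- `alphaF t φ = α(t,φ) = arctan((t - cos φ)/ sin φ)`. -/
def alphaF (t φ : ℝ) : ℝ := Real.arctan ((t - Real.cos φ) / Real.sin φ)

/-- The auxiliary function `F_r(t,φ)`. -/
def Fr (r t φ : ℝ) : ℝ :=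
  (1 / c2 r) * (t ^ r * (∫ θ in (-(Real.pi / 2))..(alphaF t φ), Real.cos θ ^ r)
    + ∫ θ in (alphaF t φ - φ)..(Real.pi / 2), Real.cos θ ^ r)

/-- The planar line `L(θ,t) = {x ∈ ℝ² : x₁ cos θ + x₂ sin θ = t}`. -/
def lineL (θ t : ℝ) : Set (ℝ × ℝ) := {x | x.1 * Real.cos θ + x.2 * Real.sin θ = t}

/-- `planarInt r K = ∫_0^{2π} ∫_0^∞ 1{L(θ,t) ∩ K ≠ ∅} t^{r-1} dt dθ`. -/
def planarInt (r : ℝ) (K : Set (ℝ × ℝ)) : ℝ :=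
  ∫ θ in (0 : ℝ)..(2 * Real.pi),
    ∫ t in Set.Ioi (0 : ℝ),
      Set.indicator {t : ℝ | (lineL θ t ∩ K).Nonempty} (fun t => t ^ (r - 1)) t

/-- The auxiliary quantity `D(n,r,γ)`. -/
def Dconst (n : ℕ) (r γ : ℝ) : ℝ :=
  (n : ℝ) * kappa n ^ 2 / r * Real.Gamma (2 * (n : ℝ) / r + 1) *
    ((n : ℝ) * kappa n * r / (4 * γ * cC n r)) ^ (2 * (n : ℝ) / r)

/-- The auxiliary quantity `E(n,r)`. -/
def Econst (n : ℕ) (r : ℝ) : ℝ :=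
  ((n : ℝ) / c2 ((n : ℝ) - 2)) *
    ∫ φ in (0 : ℝ)..Real.pi, (Real.sin φ) ^ (n - 2) *
      ∫ t in (0 : ℝ)..1, t ^ (n - 1) * (1 + t ^ r - Fr r t φ)

/-- `Mfun v r = M(v,r) = (1/c(2,r)) ∫_v^{π/2} (cos θ)^r dθ`. -/
def Mfun (v r : ℝ) : ℝ := (1 / c2 r) * ∫ θ in v..(Real.pi / 2), Real.cos θ ^ r

/-- `Aconst r = A(r) = π^{(r+1)/2}/(e Γ((r+1)/2))`. -/
def Aconst (r : ℝ) : ℝ := Real.pi ^ ((r + 1) / 2) / (Real.exp 1 * Real.Gamma ((r + 1) / 2))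

/-- `Bconst a = B(a) = 2πe(a+1)^{(a+1)/a}/a`. -/
def Bconst (a : ℝ) : ℝ := 2 * Real.pi * Real.exp 1 * (a + 1) ^ ((a + 1) / a) / a

/-- The intensity `γ̂(a,n)` normalizing the expected volume of the zero cell to `1/λ`. -/
def gammaHat (a lam : ℝ) (n : ℕ) : ℝ :=
  a * (n : ℝ) ^ 2 * kappa n / (2 * cC n (a * n)) *
    (lam * Real.Gamma (1 / a + 1) * kappa n) ^ a

/-- The embedding of `ℝ²` onto `span{e₁,e₂} ⊆ ℝⁿ`. -/
def emb (n : ℕ) (q : ℝ × ℝ) : EuclideanSpace ℝ (Fin n) :=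
  q.1 • eVec n 0 + q.2 • eVec n 1

/-- `para2 n x y = ∇₂(x,y)`, the area of the parallelogram spanned by `x` and `y`. -/
def para2 (n : ℕ) (x y : EuclideanSpace ℝ (Fin n)) : ℝ :=
  Real.sqrt (‖x‖ ^ 2 * ‖y‖ ^ 2 - (inner ℝ x y : ℝ) ^ 2)

end

lemma tan_half_eq_one_sub_cos_div_sin {φ : ℝ} (h : sin φ ≠ 0) :
    tan (φ / 2) = (1 - cos φ) / sin φ := by
  have hφ : φ = 2 * (φ / 2) := by ring
  rw [hφ, sin_two_mul] at h
  have hs : sin (φ / 2) ≠ 0 := by intro h'; simp [h'] at h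
  have hc : cos (φ / 2) ≠ 0 := by intro h'; simp [h'] at h
  rw [tan_eq_sin_div_cos, hφ, sin_two_mul, cos_two_mul, ← hφ]
  field_simp
  nlinarith [sin_sq_add_cos_sq (φ / 2)]

section Alpha

variable {t φ : ℝ}

lemma sub_pi_div_two_le_alphaF (ht : 0 ≤ t) (hφ : φ ∈ Ioo 0 π) : φ - π / 2 ≤ alphaF t φ := by
  have hsin : 0 < sin φ := sin_pos_of_pos_of_lt_pi hφ.1 hφ.2
  have htan : tan (φ - π / 2) = -cos φ / sin φ := by
    rw [tan_eq_sin_div_cos, sin_sub_pi_div_two, cos_sub_pi_div_two, neg_div]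
  calc φ - π / 2 = arctan (tan (φ - π / 2)) :=
        (arctan_tan (by linarith [hφ.1]) (by linarith [hφ.2])).symm
    _ ≤ alphaF t φ := by
        rw [htan]
        exact arctan_strictMono.monotone (div_le_div_of_nonneg_right (by linarith) hsin.le)

lemma alphaF_le_half (ht : t ≤ 1) (hφ : φ ∈ Ioo 0 π) : alphaF t φ ≤ φ / 2 := by
  have hsin : 0 < sin φ := sin_pos_of_pos_of_lt_pi hφ.1 hφ.2
  calc alphaF t φ ≤ arctan (tan (φ / 2)) := by
        rw [tan_half_eq_one_sub_cos_div_sin hsin.ne']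
        exact arctan_strictMono.monotone (div_le_div_of_nonneg_right (by linarith) hsin.le)
    _ = φ / 2 := arctan_tan (by linarith [hφ.1, pi_pos]) (by linarith [hφ.2])

end Alpha

section CosRpow

variable {r : ℝ}

lemma continuous_cos_rpow (hr : 0 ≤ r) : Continuous fun θ ↦ cos θ ^ r :=
  continuous_cos.rpow_const fun _ ↦ Or.inr hr

lemma cos_rpow_nonneg_of_mem_Icc {θ : ℝ} (hθ : θ ∈ Icc (-(π / 2)) (π / 2)) : 0 ≤ cos θ ^ r :=
  rpow_nonneg (cos_nonneg_of_mem_Icc hθ) r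

lemma integral_cos_rpow_nonneg {u v : ℝ} (hu : -(π / 2) ≤ u) (huv : u ≤ v) (hv : v ≤ π / 2) :
    0 ≤ ∫ θ in u..v, cos θ ^ r :=
  intervalIntegral.integral_nonneg huv fun _ hθ ↦
    cos_rpow_nonneg_of_mem_Icc ⟨hu.trans hθ.1, hθ.2.trans hv⟩

lemma integral_cos_rpow_le_c2 (hr : 0 ≤ r) {u v : ℝ} (hu : -(π / 2) ≤ u) (huv : u ≤ v)
    (hv : v ≤ π / 2) : ∫ θ in u..v, cos θ ^ r ≤ c2 r :=
  intervalIntegral.integral_mono_interval hu huv hv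
    (ae_restrict_of_forall_mem measurableSet_Ioc fun _ hθ ↦
      cos_rpow_nonneg_of_mem_Icc ⟨hθ.1.le, hθ.2⟩)
    ((continuous_cos_rpow hr).intervalIntegrable _ _)

lemma integral_zero_pi_div_two_cos_rpow (hr : 0 ≤ r) :
    ∫ θ in 0..π / 2, cos θ ^ r = c2 r / 2 := by
  have hsymm : ∫ θ in -(π / 2)..0, cos θ ^ r = ∫ θ in 0..π / 2, cos θ ^ r := by
    simpa using (intervalIntegral.integral_comp_neg (a := 0) (b := π / 2) fun θ ↦ cos θ ^ r).symm
  have hsplit := intervalIntegral.integral_add_adjacent_intervals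
    ((continuous_cos_rpow hr).intervalIntegrable (μ := volume) (-(π / 2)) 0)
    ((continuous_cos_rpow hr).intervalIntegrable 0 (π / 2))
  rw [c2, ← hsplit, hsymm]
  ring

lemma c2_pos (hr : 0 ≤ r) : 0 < c2 r := by
  have hhalf : 0 < ∫ θ in 0..π / 2, cos θ ^ r :=
    intervalIntegral.intervalIntegral_pos_of_pos_on
      ((continuous_cos_rpow hr).intervalIntegrable (μ := volume) _ _)
      (fun _ hθ ↦ rpow_pos_of_pos (cos_pos_of_mem_Ioo ⟨by linarith [hθ.1, pi_pos], hθ.2⟩) r)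
      (by positivity)
  rw [integral_zero_pi_div_two_cos_rpow hr] at hhalf
  linarith

lemma c2_half_le_integral_cos_rpow (hr : 0 ≤ r) {u : ℝ} (hu : -(π / 2) ≤ u) (hu0 : u ≤ 0) :
    c2 r / 2 ≤ ∫ θ in u..π / 2, cos θ ^ r := by
  rw [← integral_zero_pi_div_two_cos_rpow hr]
  exact intervalIntegral.integral_mono_interval hu0 (by positivity) le_rfl
    (ae_restrict_of_forall_mem measurableSet_Ioc fun _ hθ ↦
      cos_rpow_nonneg_of_mem_Icc ⟨hu.trans hθ.1.le, hθ.2⟩)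
    ((continuous_cos_rpow hr).intervalIntegrable _ _)

end CosRpow

/-- for every `r > 0` and `(t,φ) ∈ [0,1] × (0,π)`,
`1/2 ≤ F_r(t,φ) ≤ t^r + 1 ≤ 2`. -/
theorem statement5 (r : ℝ) (hr : 0 < r) (t φ : ℝ) (ht : t ∈ Set.Icc (0 : ℝ) 1)
    (hφ : φ ∈ Set.Ioo (0 : ℝ) Real.pi) :
    1 / 2 ≤ Fr r t φ ∧ Fr r t φ ≤ t ^ r + 1 ∧ t ^ r + 1 ≤ 2 := by
  obtain ⟨ht0, ht1⟩ := ht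
  have hα_lt : alphaF t φ < π / 2 := arctan_lt_pi_div_two _
  have hα_gt : -(π / 2) < alphaF t φ := neg_pi_div_two_lt_arctan _
  have hαφ_ge := sub_pi_div_two_le_alphaF ht0 hφ
  have hαφ_le := alphaF_le_half ht1 hφ
  have hI₁ := integral_cos_rpow_nonneg (r := r) le_rfl hα_gt.le hα_lt.le
  have hI₁c := integral_cos_rpow_le_c2 hr.le le_rfl hα_gt.le hα_lt.le
  have hI₂ := c2_half_le_integral_cos_rpow hr.le (u := alphaF t φ - φ) (by linarith)
    (by linarith [hφ.1])
  have hI₂c := integral_cos_rpow_le_c2 hr.le (u := alphaF t φ - φ) (by linarith) (by linarith)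
    le_rfl
  have htr0 : 0 ≤ t ^ r := rpow_nonneg ht0 r
  have htr1 : t ^ r ≤ 1 := rpow_le_one ht0 ht1 hr.le
  have hc := c2_pos hr.le
  rw [Fr, one_div_mul_eq_div]
  refine ⟨?_, ?_, by linarith⟩
  · rw [le_div_iff₀ hc]; nlinarith
  · rw [div_le_iff₀ hc]; nlinarith
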